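/- arXiv:1212.4442 — 2 statements merged into one kernel-verified Lean document; each statement's English description precedes it below -/
import Mathlib

section
/- For n even, DP_n is affinely isomorphic (via a coordinate projection and coordinate permutations) to the join of two copies of Q_{n/2}; in particular dim DP_n = 2·dim Q_{n/2} + 1 = 2n − 3. -/
open Matrix Finset

variable (n : ℕ) [NeZero n]

/-- Permutation matrix of `σ`: entries `δ_{i, σ(j)}`. -/
def permMat (σ : Equiv.Perm (ZMod n)) : Matrix (ZMod n) (ZMod n) ℝ :=
  Matrix.of fun i j => if i = σ j then 1 else 0

/-- Rotation `x ↦ x + 1` of the regular n-gon with vertex set `ZMod n`. -/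
def rot : Equiv.Perm (ZMod n) := Equiv.addRight 1

/-- Reflection `x ↦ -x` of the regular n-gon. -/
def rfl' : Equiv.Perm (ZMod n) := Equiv.neg (ZMod n)

/-- The dihedral group `D_n ≤ S_n`, symmetries of the regular n-gon. -/
def dihedral : Subgroup (Equiv.Perm (ZMod n)) := Subgroup.closure {rot n, rfl' n}

/-- Adjacency matrix of the n-cycle `C_n`. -/
def cycAdj : Matrix (ZMod n) (ZMod n) ℝ :=
  Matrix.of fun i j => if j = i + 1 ∨ j = i - 1 then 1 else 0

/-- The permutation polytope `DP_n = conv{M_σ : σ ∈ D_n} ⊆ ℝ^{n×n}`. -/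
def DP : Set (Matrix (ZMod n) (ZMod n) ℝ) :=
  convexHull ℝ {M | ∃ σ ∈ dihedral n, M = permMat n σ}

/-- The cyclic shift matrix `R`. -/
def Rmat : Matrix (ZMod n) (ZMod n) ℝ := Matrix.of fun i j => if j = i + 1 then 1 else 0

/-- The `2n` rows of `W = [[I,...,I],[I,R,...,R^{n-1}]]`, viewed as vectors in
`ℝ^{n²} = Matrix (ZMod n) (ZMod n) ℝ`; the first matrix coordinate is the block index. -/
def Wrow : Bool × ZMod n → Matrix (ZMod n) (ZMod n) ℝ
  | (false, k) => Matrix.of fun _ j => if j = k then 1 else 0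
  | (true, k) => Matrix.of fun b j => (Rmat n ^ b.val) k j

/-- The polytope `Q_n ⊆ ℝ^{n²}`. -/
def Qpoly : Set (Matrix (ZMod n) (ZMod n) ℝ) := convexHull ℝ (Set.range (Wrow n))

/-- A point of `ℝ^{n²}` is a lattice point if all its coordinates are integers. -/
def IsInt (x : Matrix (ZMod n) (ZMod n) ℝ) : Prop := ∀ b j, ∃ z : ℤ, x b j = (z : ℝ)

set_option linter.unusedSectionVars false
set_option linter.unusedVariables false




def Dsub : Subgroup (Equiv.Perm (ZMod n)) where
  carrier := {σ | (∃ k, ∀ x, σ x = x + k) ∨ (∃ k, ∀ x, σ x = k - x)}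
  one_mem' := Or.inl ⟨0, fun x => (add_zero x).symm⟩
  mul_mem' := by
    rintro σ τ (⟨k, hk⟩ | ⟨k, hk⟩) (⟨l, hl⟩ | ⟨l, hl⟩)
    · exact Or.inl ⟨l + k, fun x => by rw [Equiv.Perm.mul_apply, hl, hk, add_assoc]⟩
    · exact Or.inr ⟨l + k, fun x => by rw [Equiv.Perm.mul_apply, hl, hk]; ring⟩
    · exact Or.inr ⟨k - l, fun x => by rw [Equiv.Perm.mul_apply, hl, hk]; ring⟩
    · exact Or.inl ⟨k - l, fun x => by rw [Equiv.Perm.mul_apply, hl, hk]; ring⟩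
  inv_mem' := by
    rintro σ (⟨k, hk⟩ | ⟨k, hk⟩)
    · exact Or.inl ⟨-k, fun x => (Equiv.Perm.eq_inv_iff_eq.mpr (by rw [hk]; ring)).symm⟩
    · exact Or.inr ⟨k, fun x => (Equiv.Perm.eq_inv_iff_eq.mpr (by rw [hk]; ring)).symm⟩

lemma rot_pow_apply (j : ℕ) (x : ZMod n) : (rot n ^ j) x = x + (j : ZMod n) := by
  induction j generalizing x with
  | zero => simp
  | succ j ih =>
    rw [pow_succ, Equiv.Perm.mul_apply, show rot n x = x + 1 from rfl, ih]
    push_cast; ring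

lemma dihedral_eq : dihedral n = Dsub n := by
  apply le_antisymm
  · rw [dihedral, Subgroup.closure_le]
    intro σ hσ
    simp only [Set.mem_insert_iff, Set.mem_singleton_iff] at hσ
    rcases hσ with rfl | rfl
    · exact Or.inl ⟨1, fun x => rfl⟩
    · exact Or.inr ⟨0, fun x => by simp [rfl']⟩
  · intro σ hσ
    rcases hσ with ⟨k, hk⟩ | ⟨k, hk⟩
    · have h : σ = rot n ^ k.val :=
        Equiv.ext fun x => by rw [hk, rot_pow_apply, ZMod.natCast_val, ZMod.cast_id]
      rw [h, dihedral]
      exact pow_mem (Subgroup.subset_closure (by simp)) _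
    · have h : σ = rot n ^ k.val * rfl' n := Equiv.ext fun x => by
        rw [hk, Equiv.Perm.mul_apply, rot_pow_apply, ZMod.natCast_val, ZMod.cast_id]
        simp [rfl']; ring
      rw [h, dihedral]
      exact mul_mem (pow_mem (Subgroup.subset_closure (by simp)) _)
        (Subgroup.subset_closure (by simp))

def addP (t : ZMod n) : Equiv.Perm (ZMod n) := Equiv.addRight t
def refP (s : ZMod n) : Equiv.Perm (ZMod n) := (Equiv.neg (ZMod n)).trans (Equiv.addRight s)
def PR (t : ZMod n) : Matrix (ZMod n) (ZMod n) ℝ := permMat n (addP n t)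
def PS (s : ZMod n) : Matrix (ZMod n) (ZMod n) ℝ := permMat n (refP n s)

lemma PR_apply (t i j) : PR n t i j = if i - j = t then 1 else 0 := by
  simp only [PR, permMat, addP, Matrix.of_apply, Equiv.coe_addRight]
  exact if_congr ⟨fun h => by rw [h]; ring, fun h => by rw [← h]; ring⟩ rfl rfl

lemma refP_apply (s x) : refP n s x = -x + s := rfl

lemma PS_apply (s i j) : PS n s i j = if i + j = s then 1 else 0 := by
  simp only [PS, permMat, Matrix.of_apply, refP_apply]
  exact if_congr ⟨fun h => by rw [h]; ring, fun h => by rw [← h]; ring⟩ rfl rfl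

lemma vertexSet_eq :
    {M | ∃ σ ∈ dihedral n, M = permMat n σ} = Set.range (PR n) ∪ Set.range (PS n) := by
  ext M
  constructor
  · rintro ⟨σ, hσ, rfl⟩
    rw [dihedral_eq] at hσ
    rcases hσ with ⟨k, hk⟩ | ⟨k, hk⟩
    · exact Or.inl ⟨k, congrArg (permMat n) (Equiv.ext fun x => (hk x).symm)⟩
    · refine Or.inr ⟨k, congrArg (permMat n) (Equiv.ext fun x => ?_)⟩
      rw [refP_apply, hk]; ring
  · rintro (⟨t, rfl⟩ | ⟨s, rfl⟩)
    · exact ⟨addP n t, by rw [dihedral_eq]; exact Or.inl ⟨t, fun x => rfl⟩, rfl⟩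
    · refine ⟨refP n s, by rw [dihedral_eq]; exact Or.inr ⟨s, fun x => by rw [refP_apply]; ring⟩, rfl⟩


lemma natCast_val_self {k : ℕ} [NeZero k] (a : ZMod k) : ((a.val : ℕ) : ZMod k) = a := by
  rw [ZMod.natCast_val, ZMod.cast_id]

section Casts
variable (m : ℕ) [NeZero m]

instance : NeZero (2 * m) := ⟨fun h => (NeZero.ne m) (by omega)⟩

def up (u : ZMod m) : ZMod (2 * m) := (u.val : ZMod (2 * m))
def down (i : ZMod (2 * m)) : ZMod m := (i.val : ZMod m)
def hf (t : ZMod (2 * m)) : ZMod m := ((t.val / 2 : ℕ) : ZMod m)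

lemma up_val (u : ZMod m) : (up m u).val = u.val :=
  ZMod.val_cast_of_lt (lt_of_lt_of_le (ZMod.val_lt u) (by omega))

lemma down_cast (x : ZMod (2 * m)) :
    down m x = ZMod.castHom (⟨2, by ring⟩ : (m : ℕ) ∣ 2 * m) (ZMod m) x := by
  rw [ZMod.castHom_apply, down, ZMod.natCast_val]

lemma down_up (u : ZMod m) : down m (up m u) = u := by
  rw [down, up_val, natCast_val_self]

lemma down_add (a b : ZMod (2 * m)) : down m (a + b) = down m a + down m b := by
  rw [down_cast, down_cast, down_cast, map_add]

lemma valForm (u : ZMod m) (p : ℕ) (hp : p < 2) :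
    (2 * up m u + (p : ZMod (2 * m))).val = 2 * u.val + p := by
  have h1 : 2 * up m u + (p : ZMod (2 * m)) = ((2 * u.val + p : ℕ) : ZMod (2 * m)) := by
    rw [up]; push_cast; ring
  rw [h1, ZMod.val_cast_of_lt]
  have := ZMod.val_lt u; omega

lemma parForm (u : ZMod m) (p : ℕ) (hp : p < 2) :
    (2 * up m u + (p : ZMod (2 * m))).val % 2 = p := by
  rw [valForm m u p hp]; omega

lemma hfForm (u : ZMod m) (p : ℕ) (hp : p < 2) :
    hf m (2 * up m u + (p : ZMod (2 * m))) = u := by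
  rw [hf, valForm m u p hp, show (2 * u.val + p) / 2 = u.val by omega, natCast_val_self]

lemma decomp (t : ZMod (2 * m)) :
    2 * up m (hf m t) + ((t.val % 2 : ℕ) : ZMod (2 * m)) = t := by
  have h1 : up m (hf m t) = ((t.val / 2 : ℕ) : ZMod (2 * m)) := by
    rw [up, hf, ZMod.val_natCast, Nat.mod_eq_of_lt (by have := ZMod.val_lt t; omega)]
  have h2 : (2 : ZMod (2*m)) * ((t.val / 2 : ℕ) : ZMod (2 * m)) + ((t.val % 2 : ℕ) : ZMod (2 * m))
      = ((2 * (t.val / 2) + t.val % 2 : ℕ) : ZMod (2 * m)) := by push_cast; ring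
  rw [h1, h2, show 2 * (t.val / 2) + t.val % 2 = t.val by omega, natCast_val_self]

lemma two_mul_eq_iff (a b : ZMod (2 * m)) : 2 * a = 2 * b ↔ down m a = down m b := by
  have key : ∀ x : ZMod (2 * m), 2 * x = 0 ↔ down m x = 0 := by
    intro x
    have hx : (2 * x : ZMod (2*m)) = ((2 * x.val : ℕ) : ZMod (2 * m)) := by
      push_cast [natCast_val_self]; ring
    rw [hx, down, ZMod.natCast_eq_zero_iff, ZMod.natCast_eq_zero_iff]
    constructor
    · rintro ⟨c, hc⟩
      have h5 : 2 * x.val = 2 * (m * c) := by rw [hc]; ring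
      exact ⟨c, by omega⟩
    · rintro ⟨c, hc⟩
      refine ⟨c, ?_⟩
      rw [hc]; ring
  constructor
  · intro h
    have h2 : 2 * (a - b) = 0 := by rw [mul_sub, h, sub_self]
    have h3 := (key (a - b)).mp h2
    have h4 : down m a - down m b = down m (a - b) := by
      rw [down_cast, down_cast, down_cast, map_sub]
    rw [← sub_eq_zero, h4, h3]
  · intro h
    have h4 : down m (a - b) = 0 := by
      rw [down_cast, map_sub, ← down_cast, ← down_cast, h, sub_self]
    have h2 := (key (a - b)).mpr h4
    rw [mul_sub, sub_eq_zero] at h2; exact h2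

lemma parAdd (a b : ZMod (2 * m)) : (a + b).val % 2 = (a.val + b.val) % 2 := by
  rw [ZMod.val_add]; exact Nat.mod_mod_of_dvd _ ⟨m, rfl⟩

lemma par_two_mul (x : ZMod (2 * m)) : (2 * x).val % 2 = 0 := by
  have e : (2 * x : ZMod (2*m)) = ((2 * x.val : ℕ) : ZMod (2 * m)) := by
    push_cast [natCast_val_self]; ring
  rw [e, ZMod.val_natCast]
  have := Nat.mod_mod_of_dvd (2 * x.val) (⟨m, rfl⟩ : (2:ℕ) ∣ 2 * m)
  omega

lemma par_two_mul_add (t x : ZMod (2 * m)) : (t + 2 * x).val % 2 = t.val % 2 := by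
  have h2 := par_two_mul m x
  rw [parAdd]; omega

lemma parNeg (t : ZMod (2 * m)) : (-t).val % 2 = t.val % 2 := by
  have h : t + 2 * (-t) = -t := by ring
  calc (-t).val % 2 = (t + 2 * (-t)).val % 2 := by rw [h]
    _ = t.val % 2 := par_two_mul_add m t (-t)

end Casts


set_option linter.unusedSectionVars false

section Maps
variable (m : ℕ) [NeZero m]

lemma Rmat_pow (v : ℕ) (k j : ZMod m) :
    (Rmat m ^ v) k j = if j = k + (v : ZMod m) then 1 else 0 := by
  induction v generalizing j with
  | zero =>
    rw [pow_zero, Matrix.one_apply]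
    exact if_congr (by rw [Nat.cast_zero, add_zero, eq_comm]) rfl rfl
  | succ v ih =>
    rw [pow_succ, Matrix.mul_apply]
    have hterm : ∀ l, (Rmat m ^ v) k l * Rmat m l j
        = if l = k + (v : ZMod m) then (if j = k + (v : ZMod m) + 1 then 1 else 0) else 0 := by
      intro l
      rw [ih]
      by_cases hl : l = k + (v : ZMod m)
      · subst hl; simp [Rmat]
      · simp [hl]
    rw [Finset.sum_congr rfl (fun l _ => hterm l), Finset.sum_ite_eq' Finset.univ _ _]
    simp only [Finset.mem_univ, if_true]
    exact if_congr (by push_cast; rw [add_assoc]) rfl rfl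

lemma Wrow_false_apply (k : ZMod m) (b j : ZMod m) :
    Wrow m (false, k) b j = if j = k then 1 else 0 := rfl

lemma Wrow_true_apply (k : ZMod m) (b j : ZMod m) :
    Wrow m (true, k) b j = if j = k + ((b.val : ℕ) : ZMod m) then 1 else 0 :=
  Rmat_pow m b.val k j

def Fmap (p : ℕ) : Matrix (ZMod m) (ZMod m) ℝ →ₗ[ℝ] Matrix (ZMod (2*m)) (ZMod (2*m)) ℝ where
  toFun x := Matrix.of fun i j => if (i - j).val % 2 = p then x (down m i) (hf m (i - j)) else 0
  map_add' x y := by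
    ext i j
    by_cases h : (i - j).val % 2 = p <;> simp [h]
  map_smul' c x := by
    ext i j
    by_cases h : (i - j).val % 2 = p <;> simp [h]

lemma Fmap_apply (p : ℕ) (x : Matrix (ZMod m) (ZMod m) ℝ) (i j : ZMod (2*m)) :
    Fmap m p x i j = if (i - j).val % 2 = p then x (down m i) (hf m (i - j)) else 0 := rfl

lemma Fmap_inj (p : ℕ) (hp : p < 2) : Function.Injective (Fmap m p) := by
  intro x y hxy
  ext a u
  have hij : Fmap m p x (up m a) (up m a - (2 * up m u + (p : ZMod (2*m))))
      = Fmap m p y (up m a) (up m a - (2 * up m u + (p : ZMod (2*m)))) := by rw [hxy]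
  rw [Fmap_apply, Fmap_apply, sub_sub_cancel] at hij
  rw [parForm m u p hp, if_pos rfl, if_pos rfl, hfForm m u p hp, down_up] at hij
  exact hij

lemma Fmap_Wrow_false (p : ℕ) (hp : p < 2) (k : ZMod m) :
    Fmap m p (Wrow m (false, k)) = PR (2*m) (2 * up m k + (p : ZMod (2*m))) := by
  ext i j
  rw [Fmap_apply, PR_apply, Wrow_false_apply]
  by_cases hpar : (i - j).val % 2 = p
  · rw [if_pos hpar]
    refine if_congr ?_ rfl rfl
    constructor
    · intro h
      have hd := decomp m (i - j)
      rw [hpar, h] at hd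
      exact hd.symm
    · intro h
      rw [h, hfForm m k p hp]
  · rw [if_neg hpar, if_neg]
    intro h
    rw [h, parForm m k p hp] at hpar
    exact hpar rfl

lemma Fmap_Wrow_true (p : ℕ) (hp : p < 2) (k : ZMod m) :
    Fmap m p (Wrow m (true, k)) = PS (2*m) (-(2 * up m k + (p : ZMod (2*m)))) := by
  ext i j
  rw [Fmap_apply, PS_apply, Wrow_true_apply, natCast_val_self]
  by_cases hpar : (i - j).val % 2 = p
  · rw [if_pos hpar]
    refine if_congr ?_ rfl rfl
    have hd := decomp m (i - j)
    rw [hpar] at hd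
    constructor
    · intro h
      have heq : hf m (i - j) = down m i + k := by rw [h]; ring
      have h2 : 2 * up m (hf m (i - j)) = 2 * (i + up m k) := by
        rw [two_mul_eq_iff, down_up, down_add, down_up, heq]
      rw [h2] at hd
      linear_combination hd
    · intro h
      have hA : 2 * up m (hf m (i - j)) = 2 * (i + up m k) := by
        linear_combination hd - h
      have h3 := (two_mul_eq_iff m _ _).mp hA
      rw [down_up, down_add, down_up] at h3
      rw [h3]; ring
  · rw [if_neg hpar, if_neg]
    intro h
    have hA : i - j = (2 * up m k + (p : ZMod (2*m))) + 2 * i := by linear_combination -h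
    rw [hA, par_two_mul_add, parForm m k p hp] at hpar
    exact hpar rfl

end Maps

section Dim
variable (m : ℕ) [NeZero m]

def Phi : ((Bool × ZMod (2*m)) → ℝ) →ₗ[ℝ] Matrix (ZMod (2*m)) (ZMod (2*m)) ℝ where
  toFun f := Matrix.of fun i j => f (false, i - j) + f (true, i + j)
  map_add' f g := by
    ext i j
    simp only [Matrix.of_apply, Matrix.add_apply, Pi.add_apply]
    ring
  map_smul' c f := by
    ext i j
    simp only [Matrix.of_apply, Matrix.smul_apply, Pi.smul_apply, smul_eq_mul, RingHom.id_apply]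
    ring

lemma Phi_apply (f : (Bool × ZMod (2*m)) → ℝ) (i j : ZMod (2*m)) :
    Phi m f i j = f (false, i - j) + f (true, i + j) := rfl

lemma Phi_single_false (d : ZMod (2*m)) :
    Phi m (Pi.single (false, d) 1) = PR (2*m) d := by
  ext i j
  rw [Phi_apply, PR_apply]
  simp [Pi.single_apply, Prod.ext_iff]

lemma Phi_single_true (s : ZMod (2*m)) :
    Phi m (Pi.single (true, s) 1) = PS (2*m) s := by
  ext i j
  rw [Phi_apply, PS_apply]
  simp [Pi.single_apply, Prod.ext_iff]

def sumF : ((Bool × ZMod (2*m)) → ℝ) →ₗ[ℝ] ℝ where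
  toFun f := ∑ x, f x
  map_add' f g := by simp [Finset.sum_add_distrib]
  map_smul' c f := by simp [Finset.mul_sum]

lemma sumF_single (x : Bool × ZMod (2*m)) (r : ℝ) : sumF m (Pi.single x r) = r := by
  show ∑ y, Pi.single x r y = r
  simp [Pi.single_apply, Finset.sum_ite_eq']

def bdiff (x : Bool × ZMod (2*m)) : (Bool × ZMod (2*m)) → ℝ :=
  Pi.single x 1 - Pi.single (false, (0 : ZMod (2*m))) 1

lemma span_bdiff : Submodule.span ℝ (Set.range (bdiff m)) = LinearMap.ker (sumF m) := by
  apply le_antisymm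
  · rw [Submodule.span_le]
    rintro v ⟨x, rfl⟩
    simp [SetLike.mem_coe, LinearMap.mem_ker, bdiff, map_sub, sumF_single]
  · intro v hv
    have hv' : ∑ x, v x = 0 := LinearMap.mem_ker.mp hv
    have hrep : v = ∑ x, v x • bdiff m x := by
      have h1 : ∑ x, v x • bdiff m x
          = (∑ x, v x • (Pi.single x (1:ℝ) : (Bool × ZMod (2*m)) → ℝ))
            - (∑ x, v x) • (Pi.single (false, (0:ZMod (2*m))) (1:ℝ) : (Bool × ZMod (2*m)) → ℝ) := by
        rw [Finset.sum_smul, ← Finset.sum_sub_distrib]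
        exact Finset.sum_congr rfl fun x _ => by rw [bdiff, smul_sub]
      have h2 : ∑ x, v x • (Pi.single x (1:ℝ) : (Bool × ZMod (2*m)) → ℝ) = v := by
        have he : ∀ x, v x • (Pi.single x (1:ℝ) : (Bool × ZMod (2*m)) → ℝ)
            = (Pi.single x (v x) : (Bool × ZMod (2*m)) → ℝ) := by
          intro x; rw [← Pi.single_smul, smul_eq_mul, mul_one]
        rw [Finset.sum_congr rfl fun x _ => he x, Finset.univ_sum_single]
      rw [h1, h2, hv', zero_smul, sub_zero]
    rw [hrep]
    exact Submodule.sum_mem _ fun x _ =>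
      Submodule.smul_mem _ _ (Submodule.subset_span ⟨x, rfl⟩)

def kvec (p : ℕ) : (Bool × ZMod (2*m)) → ℝ :=
  fun y => if y.2.val % 2 = p then (if y.1 then -1 else 1) else 0

lemma Phi_kvec (p : ℕ) : Phi m (kvec m p) = 0 := by
  ext i j
  rw [Phi_apply, Matrix.zero_apply]
  have hpar : (i + j).val % 2 = (i - j).val % 2 := by
    rw [show i + j = (i - j) + 2 * j from by ring, par_two_mul_add]
  have e1 : kvec m p (false, i - j) = if (i - j).val % 2 = p then (1:ℝ) else 0 := by
    simp [kvec]
  have e2 : kvec m p (true, i + j) = if (i + j).val % 2 = p then (-1:ℝ) else 0 := by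
    simp [kvec]
  rw [e1, e2, hpar]
  by_cases h : (i - j).val % 2 = p <;> simp [h]

lemma sumF_kvec (p : ℕ) : sumF m (kvec m p) = 0 := by
  show ∑ x : Bool × ZMod (2*m), kvec m p x = 0
  rw [Fintype.sum_prod_type, Fintype.sum_bool]
  have e : ∀ d : ZMod (2*m), kvec m p (true, d) = -(kvec m p (false, d)) := by
    intro d
    by_cases h : d.val % 2 = p <;> simp [kvec, h]
  rw [Finset.sum_congr rfl fun d _ => e d, Finset.sum_neg_distrib]
  ring

lemma kerPhi : LinearMap.ker (Phi m) = Submodule.span ℝ (Set.range ![kvec m 0, kvec m 1]) := by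
  haveI : Fact (1 < 2*m) := ⟨by have := NeZero.pos m; omega⟩
  apply le_antisymm
  · intro f hfm
    have h0 : ∀ i j : ZMod (2*m), f (false, i - j) + f (true, i + j) = 0 := by
      intro i j
      have hz : Phi m f = 0 := LinearMap.mem_ker.mp hfm
      have h := congrArg (fun M => M i j) hz
      simp only [Matrix.zero_apply] at h
      rw [← Phi_apply]
      exact h
    have step1 : ∀ d, f (true, d) = -f (false, d) := by
      intro d
      have h := h0 d 0
      rw [sub_zero, add_zero] at h
      linarith
    have step2 : ∀ d d' : ZMod (2*m), d.val % 2 = d'.val % 2 → f (false, d) = f (false, d') := by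
      intro d d' hpar
      have hsub : (d - d').val % 2 = 0 := by
        have h1 := parAdd m d' (d - d')
        rw [show d' + (d - d') = d from by ring] at h1
        omega
      have hx : d - d' = 2 * up m (hf m (d - d')) := by
        have hd := decomp m (d - d')
        rw [hsub] at hd
        simpa using hd.symm
      have h := h0 (d' + up m (hf m (d - d'))) (up m (hf m (d - d')))
      rw [add_sub_cancel_right,
        show d' + up m (hf m (d - d')) + up m (hf m (d - d')) = d' + 2 * up m (hf m (d - d')) from by ring,
        ← hx, show d' + (d - d') = d from by ring] at h
      have hs := step1 d
      linarith
    have hval0 : ((0 : ZMod (2*m))).val % 2 = 0 := by rw [ZMod.val_zero]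
    have hval1 : ((1 : ZMod (2*m))).val % 2 = 1 := by rw [ZMod.val_one]
    have hrep : f = f (false, 0) • kvec m 0 + f (false, 1) • kvec m 1 := by
      funext y
      obtain ⟨b, d⟩ := y
      have hx : (f (false,0) • kvec m 0 + f (false,1) • kvec m 1) (b, d)
          = f (false,0) * kvec m 0 (b,d) + f (false,1) * kvec m 1 (b,d) := rfl
      rw [hx]
      have hd := Nat.mod_two_eq_zero_or_one d.val
      cases b
      · rcases hd with hd | hd
        · rw [show kvec m 0 (false, d) = (1:ℝ) from by simp [kvec, hd],
            show kvec m 1 (false, d) = (0:ℝ) from by simp [kvec, hd],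
            step2 d 0 (by rw [hval0, hd])]
          ring
        · rw [show kvec m 0 (false, d) = (0:ℝ) from by simp [kvec, hd],
            show kvec m 1 (false, d) = (1:ℝ) from by simp [kvec, hd],
            step2 d 1 (by rw [hval1, hd])]
          ring
      · rw [step1 d]
        rcases hd with hd | hd
        · rw [show kvec m 0 (true, d) = (-1:ℝ) from by simp [kvec, hd],
            show kvec m 1 (true, d) = (0:ℝ) from by simp [kvec, hd],
            step2 d 0 (by rw [hval0, hd])]
          ring
        · rw [show kvec m 0 (true, d) = (0:ℝ) from by simp [kvec, hd],
            show kvec m 1 (true, d) = (-1:ℝ) from by simp [kvec, hd],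
            step2 d 1 (by rw [hval1, hd])]
          ring
    rw [hrep]
    exact Submodule.add_mem _
      (Submodule.smul_mem _ _ (Submodule.subset_span ⟨0, rfl⟩))
      (Submodule.smul_mem _ _ (Submodule.subset_span ⟨1, rfl⟩))
  · rw [Submodule.span_le]
    rintro v ⟨i, rfl⟩
    fin_cases i
    · simp only [Matrix.cons_val_zero, SetLike.mem_coe, LinearMap.mem_ker]
      exact Phi_kvec m 0
    · simp only [Matrix.cons_val_one, Matrix.head_cons, SetLike.mem_coe, LinearMap.mem_ker]
      exact Phi_kvec m 1

lemma kvec_indep : LinearIndependent ℝ ![kvec m 0, kvec m 1] := by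
  haveI : Fact (1 < 2*m) := ⟨by have := NeZero.pos m; omega⟩
  rw [LinearIndependent.pair_iff]
  intro s t hst
  have h0 := congrFun hst (false, (0 : ZMod (2*m)))
  have h1 := congrFun hst (false, (1 : ZMod (2*m)))
  simp only [Pi.add_apply, Pi.smul_apply, smul_eq_mul, Pi.zero_apply] at h0 h1
  rw [show kvec m 0 (false, (0:ZMod (2*m))) = (1:ℝ) from by simp [kvec, ZMod.val_zero],
    show kvec m 1 (false, (0:ZMod (2*m))) = (0:ℝ) from by simp [kvec, ZMod.val_zero]] at h0
  rw [show kvec m 0 (false, (1:ZMod (2*m))) = (0:ℝ) from by simp [kvec, ZMod.val_one],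
    show kvec m 1 (false, (1:ZMod (2*m))) = (1:ℝ) from by simp [kvec, ZMod.val_one]] at h1
  constructor <;> linarith

lemma Phi_bdiff (x : Bool × ZMod (2*m)) :
    Phi m (bdiff m x) = Phi m (Pi.single x 1) - PR (2*m) 0 := by
  rw [bdiff, map_sub, Phi_single_false]

lemma vsub_image :
    (fun M => M - PR (2*m) 0) '' (Set.range (PR (2*m)) ∪ Set.range (PS (2*m)))
      = ⇑(Phi m) '' Set.range (bdiff m) := by
  ext M
  simp only [Set.mem_image, Set.mem_union, Set.mem_range]
  constructor
  · rintro ⟨v, (⟨t, rfl⟩ | ⟨s, rfl⟩), rfl⟩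
    · exact ⟨bdiff m (false, t), ⟨(false, t), rfl⟩, by rw [Phi_bdiff, Phi_single_false]⟩
    · exact ⟨bdiff m (true, s), ⟨(true, s), rfl⟩, by rw [Phi_bdiff, Phi_single_true]⟩
  · rintro ⟨v, ⟨⟨b, d⟩, rfl⟩, rfl⟩
    cases b
    · exact ⟨PR (2*m) d, Or.inl ⟨d, rfl⟩, by rw [Phi_bdiff, Phi_single_false]⟩
    · exact ⟨PS (2*m) d, Or.inr ⟨d, rfl⟩, by rw [Phi_bdiff, Phi_single_true]⟩

lemma vectorSpan_convexHull' (s : Set (Matrix (ZMod (2*m)) (ZMod (2*m)) ℝ)) :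
    vectorSpan ℝ (convexHull ℝ s) = vectorSpan ℝ s := by
  rw [← direction_affineSpan, affineSpan_convexHull, direction_affineSpan]

set_option maxHeartbeats 1000000 in
set_option synthInstance.maxHeartbeats 400000 in
lemma finrank_DP : Module.finrank ℝ (vectorSpan ℝ (DP (2*m))) = 2*(2*m) - 3 := by
  have hDP : DP (2*m) = convexHull ℝ (Set.range (PR (2*m)) ∪ Set.range (PS (2*m))) := by
    rw [DP, vertexSet_eq]
  rw [hDP, vectorSpan_convexHull']
  have hmem : PR (2*m) 0 ∈ Set.range (PR (2*m)) ∪ Set.range (PS (2*m)) := Or.inl ⟨0, rfl⟩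
  rw [vectorSpan_eq_span_vsub_set_right ℝ hmem]
  have himg : (fun x => x -ᵥ PR (2*m) 0) '' (Set.range (PR (2*m)) ∪ Set.range (PS (2*m)))
      = ⇑(Phi m) '' Set.range (bdiff m) := vsub_image m
  rw [himg, Submodule.span_image, span_bdiff]
  set K := LinearMap.ker (sumF m) with hKdef
  have hcard : Module.finrank ℝ ((Bool × ZMod (2*m)) → ℝ) = 2 * (2*m) := by
    rw [Module.finrank_fintype_fun_eq_card, Fintype.card_prod, Fintype.card_bool, ZMod.card]
  have hrange_top : LinearMap.range (sumF m) = ⊤ := by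
    rw [LinearMap.range_eq_top]
    intro r
    exact ⟨Pi.single (false, (0:ZMod (2*m))) r, sumF_single m _ r⟩
  have hK : Module.finrank ℝ K = 2*(2*m) - 1 := by
    have h1 := LinearMap.finrank_range_add_finrank_ker (sumF m)
    rw [← hKdef, hrange_top, hcard] at h1
    have h2 : Module.finrank ℝ (⊤ : Submodule ℝ ℝ) = 1 := by
      rw [finrank_top, Module.finrank_self]
    have hm1 := NeZero.pos m
    omega
  have hkerPhi : Module.finrank ℝ (LinearMap.ker (Phi m)) = 2 := by
    rw [kerPhi, finrank_span_eq_card (kvec_indep m), Fintype.card_fin]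
  have hle : LinearMap.ker (Phi m) ≤ K := by
    rw [kerPhi, Submodule.span_le]
    rintro v ⟨i, rfl⟩
    fin_cases i
    · simp only [Matrix.cons_val_zero, SetLike.mem_coe]
      exact LinearMap.mem_ker.mpr (sumF_kvec m 0)
    · simp only [Matrix.cons_val_one, Matrix.head_cons, SetLike.mem_coe]
      exact LinearMap.mem_ker.mpr (sumF_kvec m 1)
  have h3 := LinearMap.finrank_range_add_finrank_ker ((Phi m).domRestrict K)
  rw [LinearMap.range_domRestrict, LinearMap.ker_domRestrict] at h3
  have h4 : Module.finrank ℝ (Submodule.comap K.subtype (LinearMap.ker (Phi m)))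
      = Module.finrank ℝ (LinearMap.ker (Phi m)) :=
    (Submodule.comapSubtypeEquivOfLe hle).finrank_eq
  rw [h4, hkerPhi, hK] at h3
  have hm1 := NeZero.pos m
  omega

end Dim

section Ell
variable (m : ℕ) [NeZero m]

def ell : Matrix (ZMod (2*m)) (ZMod (2*m)) ℝ →ₗ[ℝ] ℝ where
  toFun M := ∑ j, if j.val % 2 = 0 then M 0 j else 0
  map_add' M N := by
    simp only [Matrix.add_apply]
    rw [← Finset.sum_add_distrib]
    exact Finset.sum_congr rfl fun j _ => by by_cases h : j.val % 2 = 0 <;> simp [h]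
  map_smul' c M := by
    simp only [Matrix.smul_apply, smul_eq_mul, RingHom.id_apply]
    rw [Finset.mul_sum]
    exact Finset.sum_congr rfl fun j _ => by by_cases h : j.val % 2 = 0 <;> simp [h]

lemma ell_apply (M : Matrix (ZMod (2*m)) (ZMod (2*m)) ℝ) :
    ell m M = ∑ j, if j.val % 2 = 0 then M 0 j else 0 := rfl

lemma ell_PR (t : ZMod (2*m)) : ell m (PR (2*m) t) = if t.val % 2 = 0 then 1 else 0 := by
  rw [ell_apply]
  have hterm : ∀ j : ZMod (2*m), (if j.val % 2 = 0 then PR (2*m) t 0 j else 0)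
      = if j = -t then (if (-t).val % 2 = 0 then (1:ℝ) else 0) else 0 := by
    intro j
    rw [PR_apply]
    by_cases hj : j = -t
    · subst hj
      simp [show (0:ZMod (2*m)) - -t = t from by ring]
    · have hc' : ¬(-j = t) := fun hc => hj (by linear_combination -hc)
      simp [hj, hc']
  rw [Finset.sum_congr rfl fun j _ => hterm j, Finset.sum_ite_eq' Finset.univ (-t) _,
    if_pos (Finset.mem_univ _), parNeg]

lemma ell_PS (s : ZMod (2*m)) : ell m (PS (2*m) s) = if s.val % 2 = 0 then 1 else 0 := by
  rw [ell_apply]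
  have hterm : ∀ j : ZMod (2*m), (if j.val % 2 = 0 then PS (2*m) s 0 j else 0)
      = if j = s then (if s.val % 2 = 0 then (1:ℝ) else 0) else 0 := by
    intro j
    rw [PS_apply]
    by_cases hj : j = s
    · subst hj
      simp
    · have hc' : ¬((0:ZMod (2*m)) + j = s) := by rw [zero_add]; exact hj
      simp [hj, hc']
  rw [Finset.sum_congr rfl fun j _ => hterm j, Finset.sum_ite_eq' Finset.univ s _,
    if_pos (Finset.mem_univ _)]

lemma ell_vertex (p : ℕ) (hp : p < 2) :
    ∀ v ∈ ⇑(Fmap m p) '' Set.range (Wrow m), ell m v = if p = 0 then 1 else 0 := by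
  rintro v ⟨w, ⟨⟨b, k⟩, rfl⟩, rfl⟩
  cases b
  · rw [Fmap_Wrow_false m p hp k, ell_PR, parForm m k p hp]
  · rw [Fmap_Wrow_true m p hp k, ell_PS, parNeg, parForm m k p hp]

noncomputable def level (r : ℝ) : AffineSubspace ℝ (Matrix (ZMod (2*m)) (ZMod (2*m)) ℝ) where
  carrier := {M | ell m M = r}
  smul_vsub_vadd_mem' := by
    intro c p1 p2 p3 h1 h2 h3
    simp only [Set.mem_setOf_eq] at *
    simp only [vsub_eq_sub, vadd_eq_add, map_add, map_sub, _root_.map_smul, smul_eq_mul, h1, h2, h3]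
    ring

lemma mem_affineSpan_ell {s : Set (Matrix (ZMod (2*m)) (ZMod (2*m)) ℝ)} {r : ℝ}
    (h : ∀ v ∈ s, ell m v = r) : ∀ x ∈ affineSpan ℝ s, ell m x = r := by
  have hle : affineSpan ℝ s ≤ level m r := affineSpan_le.mpr h
  exact fun x hx => hle hx

def evenSupp (p : ℕ) : Submodule ℝ (Matrix (ZMod (2*m)) (ZMod (2*m)) ℝ) where
  carrier := {M | ∀ i j, (i - j).val % 2 ≠ p → M i j = 0}
  add_mem' := by
    intro a b ha hb i j h
    rw [Matrix.add_apply, ha i j h, hb i j h, add_zero]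
  zero_mem' := fun i j _ => rfl
  smul_mem' := by
    intro c a ha i j h
    rw [Matrix.smul_apply, ha i j h, smul_zero]

lemma Fmap_mem_evenSupp (p : ℕ) (x : Matrix (ZMod m) (ZMod m) ℝ) :
    Fmap m p x ∈ evenSupp m p := fun i j h => by
  rw [Fmap_apply, if_neg h]

lemma disjoint_evenSupp : Disjoint (evenSupp m 0) (evenSupp m 1) := by
  rw [Submodule.disjoint_def]
  intro M h0 h1
  ext i j
  rcases Nat.mod_two_eq_zero_or_one ((i - j).val) with h | h
  · rw [Matrix.zero_apply]; exact h1 i j (by omega)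
  · rw [Matrix.zero_apply]; exact h0 i j (by omega)

lemma vectorSpan_le_evenSupp (p : ℕ) (s : Set (Matrix (ZMod (2*m)) (ZMod (2*m)) ℝ))
    (hs : s ⊆ ↑(evenSupp m p)) : vectorSpan ℝ s ≤ evenSupp m p := by
  refine Submodule.span_le.mpr ?_
  rintro v hv
  rw [Set.mem_vsub] at hv
  obtain ⟨a, ha, b, hb, rfl⟩ := hv
  rw [vsub_eq_sub]
  exact Submodule.sub_mem _ (hs ha) (hs hb)

lemma unions_eq :
    (⇑(Fmap m 0) '' Set.range (Wrow m)) ∪ (⇑(Fmap m 1) '' Set.range (Wrow m))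
      = Set.range (PR (2*m)) ∪ Set.range (PS (2*m)) := by
  ext M
  simp only [Set.mem_union, Set.mem_image, Set.mem_range]
  constructor
  · rintro (⟨w, ⟨⟨b, k⟩, rfl⟩, rfl⟩ | ⟨w, ⟨⟨b, k⟩, rfl⟩, rfl⟩)
    · cases b
      · exact Or.inl ⟨_, (Fmap_Wrow_false m 0 (by omega) k).symm⟩
      · exact Or.inr ⟨_, (Fmap_Wrow_true m 0 (by omega) k).symm⟩
    · cases b
      · exact Or.inl ⟨_, (Fmap_Wrow_false m 1 (by omega) k).symm⟩
      · exact Or.inr ⟨_, (Fmap_Wrow_true m 1 (by omega) k).symm⟩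
  · rintro (⟨t, rfl⟩ | ⟨s, rfl⟩)
    · rcases Nat.mod_two_eq_zero_or_one t.val with h | h
      · refine Or.inl ⟨Wrow m (false, hf m t), ⟨(false, hf m t), rfl⟩, ?_⟩
        rw [Fmap_Wrow_false m 0 (by omega) (hf m t)]
        have hd := decomp m t
        rw [h] at hd
        rw [hd]
      · refine Or.inr ⟨Wrow m (false, hf m t), ⟨(false, hf m t), rfl⟩, ?_⟩
        rw [Fmap_Wrow_false m 1 (by omega) (hf m t)]
        have hd := decomp m t
        rw [h] at hd
        rw [hd]
    · rcases Nat.mod_two_eq_zero_or_one s.val with h | h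
      · refine Or.inl ⟨Wrow m (true, hf m (-s)), ⟨(true, hf m (-s)), rfl⟩, ?_⟩
        rw [Fmap_Wrow_true m 0 (by omega) (hf m (-s))]
        have h2 : (-s).val % 2 = 0 := by rw [parNeg]; exact h
        have hd := decomp m (-s)
        rw [h2] at hd
        rw [hd, neg_neg]
      · refine Or.inr ⟨Wrow m (true, hf m (-s)), ⟨(true, hf m (-s)), rfl⟩, ?_⟩
        rw [Fmap_Wrow_true m 1 (by omega) (hf m (-s))]
        have h2 : (-s).val % 2 = 1 := by rw [parNeg]; exact h
        have hd := decomp m (-s)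
        rw [h2] at hd
        rw [hd, neg_neg]

lemma him (p : ℕ) : ⇑((Fmap m p).toAffineMap) '' Qpoly m
    = convexHull ℝ (⇑(Fmap m p) '' Set.range (Wrow m)) := by
  rw [show Qpoly m = convexHull ℝ (Set.range (Wrow m)) from rfl, AffineMap.image_convexHull,
    LinearMap.coe_toAffineMap]

end Ell


/-- for even `n = 2m`, `DP_n` is affinely isomorphic to a join of two copies
of `Q_{n/2}` lying in skew affine subspaces; in particular `dim DP_n = 2n - 3`. -/
theorem DP_even_join_of_two_Q (m : ℕ) [NeZero m] [NeZero (2 * m)] (hm : 2 ≤ m) :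
    ∃ (P₁ P₂ : Set (Matrix (ZMod (2 * m)) (ZMod (2 * m)) ℝ))
      (f₁ f₂ : Matrix (ZMod m) (ZMod m) ℝ →ᵃ[ℝ] Matrix (ZMod (2 * m)) (ZMod (2 * m)) ℝ),
      Function.Injective f₁ ∧ Function.Injective f₂ ∧
      f₁ '' Qpoly m = P₁ ∧ f₂ '' Qpoly m = P₂ ∧
      ((affineSpan ℝ P₁ : Set (Matrix (ZMod (2 * m)) (ZMod (2 * m)) ℝ)) ∩
        (affineSpan ℝ P₂ : Set (Matrix (ZMod (2 * m)) (ZMod (2 * m)) ℝ)) = ∅) ∧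
      Disjoint (affineSpan ℝ P₁).direction (affineSpan ℝ P₂).direction ∧
      (∃ g : Matrix (ZMod (2 * m)) (ZMod (2 * m)) ℝ ≃ᵃ[ℝ] Matrix (ZMod (2 * m)) (ZMod (2 * m)) ℝ,
        g '' DP (2 * m) = convexHull ℝ (P₁ ∪ P₂)) ∧
      Module.finrank ℝ (vectorSpan ℝ (DP (2 * m))) = 2 * (2 * m) - 3 := by
  classical
  refine ⟨⇑((Fmap m 0).toAffineMap) '' Qpoly m, ⇑((Fmap m 1).toAffineMap) '' Qpoly m,
    (Fmap m 0).toAffineMap, (Fmap m 1).toAffineMap, ?_, ?_, rfl, rfl, ?_, ?_, ?_, ?_⟩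
  · rw [LinearMap.coe_toAffineMap]; exact Fmap_inj m 0 (by omega)
  · rw [LinearMap.coe_toAffineMap]; exact Fmap_inj m 1 (by omega)
  · have h0 : ∀ x ∈ affineSpan ℝ (⇑((Fmap m 0).toAffineMap) '' Qpoly m), ell m x = 1 := by
      rw [him m 0, affineSpan_convexHull]
      exact mem_affineSpan_ell m fun v hv => by
        have := ell_vertex m 0 (by omega) v hv
        simpa using this
    have h1 : ∀ x ∈ affineSpan ℝ (⇑((Fmap m 1).toAffineMap) '' Qpoly m), ell m x = 0 := by
      rw [him m 1, affineSpan_convexHull]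
      exact mem_affineSpan_ell m fun v hv => by
        have := ell_vertex m 1 (by omega) v hv
        simpa using this
    rw [Set.eq_empty_iff_forall_notMem]
    rintro x ⟨hx0, hx1⟩
    exact one_ne_zero ((h0 x hx0).symm.trans (h1 x hx1))
  · rw [direction_affineSpan, direction_affineSpan]
    refine Disjoint.mono ?_ ?_ (disjoint_evenSupp m)
    · refine vectorSpan_le_evenSupp m 0 _ ?_
      rintro v ⟨q, hq, rfl⟩
      exact Fmap_mem_evenSupp m 0 q
    · refine vectorSpan_le_evenSupp m 1 _ ?_
      rintro v ⟨q, hq, rfl⟩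
      exact Fmap_mem_evenSupp m 1 q
  · refine ⟨AffineEquiv.refl ℝ _, ?_⟩
    rw [AffineEquiv.coe_refl, Set.image_id]
    rw [him m 0, him m 1, convexHull_convexHull_union_left, convexHull_convexHull_union_right,
      unions_eq m]
    rw [DP, vertexSet_eq]
  · exact finrank_DP m
end

section
/- For n even, the h*-vector of DP_n equals (1, 2, 3, ..., n/2−1, n/2, n/2−1, ..., 2, 1); equivalently its h*-polynomial is (1 + t + ... + t^{n/2−1})², the square of the h*-polynomial of Q_{n/2}. -/
open Matrix Finset Pointwise

variable (n : ℕ) [NeZero n]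

/-!
The vertices of `DP_n` are the indicator matrices of `i - j = c` (rotations) and `i + j = c`
(reflections), so the points of `k • DP_n` are the matrices `x i j = a (i - j) + b (i + j)` with
`a, b ≥ 0` of total mass `k`. For `n = 2m`, `i - j` and `i + j` have the same parity, so
`(a, b)` is only determined up to moving a constant from `a` to `b` on each parity class;
requiring `a` to vanish somewhere on each class makes the representation unique, and for an
integral `x` it makes `a` and `b` integral. Counting such pairs by mass gives the Ehrhart series
`((1 - t^m) / (1 - t)^m)^2 / (1 - t)^(2m)`, i.e. `(1 + ⋯ + t^(m-1))^2 / (1 - t)^(4m-2)`.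
-/

open PowerSeries

section GenFun

variable (R : Type*) [CommRing R] {α β ι : Type*}

noncomputable def genFun (w : α → ℕ) : PowerSeries R :=
  PowerSeries.mk fun k => (Nat.card {a // w a = k} : R)

variable {R}

theorem coeff_genFun (w : α → ℕ) (k : ℕ) : coeff k (genFun R w) = Nat.card {a // w a = k} :=
  coeff_mk _ _

theorem genFun_congr {w : α → ℕ} {w' : β → ℕ} (e : α ≃ β) (h : ∀ a, w' (e a) = w a) :
    genFun R w = genFun R w' := by
  ext k
  rw [coeff_genFun, coeff_genFun,
    Nat.card_congr (e.subtypeEquiv (q := fun b => w' b = k) fun a => by rw [h a])]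

theorem genFun_add_const (w : α → ℕ) (c : ℕ) :
    genFun R (fun a => w a + c) = X ^ c * genFun R w := by
  ext k
  rw [coeff_genFun, coeff_X_pow_mul', coeff_genFun]
  split_ifs with hck
  · exact congrArg _ (Nat.card_congr (Equiv.subtypeEquivRight fun a => by omega))
  · have : IsEmpty {a // w a + c = k} := ⟨fun a => hck (by omega)⟩
    simp

theorem genFun_eq_add_compl (w : α → ℕ) [∀ k, Finite {a // w a = k}] (p : α → Prop) :
    genFun R w
      = genFun R (fun a : {a // p a} => w a) + genFun R (fun a : {a // ¬p a} => w a) := by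
  classical
  ext k
  let e : {a : {a // p a} // w a = k} ⊕ {a : {a // ¬p a} // w a = k} ≃ {a // w a = k} :=
    (Equiv.subtypeSum (p := fun x => w (Equiv.sumCompl p x) = k)).symm.trans
      (Equiv.subtypeEquivOfSubtype (p := fun a => w a = k) (Equiv.sumCompl p))
  have : Finite ({a : {a // p a} // w a = k} ⊕ {a : {a // ¬p a} // w a = k}) :=
    .of_equiv _ e.symm
  have := Finite.sum_left (α := {a : {a // p a} // w a = k}) {a : {a // ¬p a} // w a = k}
  have := Finite.sum_right {a : {a // p a} // w a = k} (β := {a : {a // ¬p a} // w a = k})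
  rw [map_add, coeff_genFun, coeff_genFun, coeff_genFun, ← Nat.card_congr e, Nat.card_sum,
    Nat.cast_add]

theorem genFun_prod (w : α → ℕ) (w' : β → ℕ) [∀ k, Finite {a // w a = k}]
    [∀ k, Finite {b // w' b = k}] :
    genFun R (fun p : α × β => w p.1 + w' p.2) = genFun R w * genFun R w' := by
  ext k
  let e : {p : α × β // w p.1 + w' p.2 = k} ≃
      Σ q : antidiagonal k, {a // w a = q.1.1} × {b // w' b = q.1.2} :=
    { toFun p := ⟨⟨(w p.1.1, w' p.1.2), mem_antidiagonal.2 p.2⟩, ⟨p.1.1, rfl⟩, ⟨p.1.2, rfl⟩⟩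
      invFun q := ⟨(q.2.1, q.2.2), by rw [q.2.1.2, q.2.2.2]; exact mem_antidiagonal.1 q.1.2⟩
      left_inv p := rfl
      right_inv := by
        rintro ⟨⟨⟨i, j⟩, hij⟩, ⟨a, ha⟩, ⟨b, hb⟩⟩
        obtain rfl : w a = i := ha
        obtain rfl : w' b = j := hb
        rfl }
  rw [coeff_genFun, coeff_mul, Nat.card_congr e, Nat.card_sigma]
  push_cast [Nat.card_prod, coeff_genFun]
  exact Finset.sum_coe_sort (antidiagonal k)
    fun q => (Nat.card {a // w a = q.1} : R) * Nat.card {b // w' b = q.2}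

instance finite_sum_fiber [Fintype ι] (k : ℕ) : Finite {c : ι → ℕ // ∑ i, c i = k} := by
  refine .of_injective (β := ι → Fin (k + 1)) (fun c i => ⟨c.1 i, Nat.lt_succ_of_le ?_⟩)
    fun c d h => Subtype.ext (funext fun i => congrArg Fin.val (congrFun h i))
  exact (Finset.single_le_sum (fun j _ => Nat.zero_le (c.1 j)) (Finset.mem_univ i)).trans_eq c.2

instance finite_subtype_sum_fiber [Fintype ι] (p : (ι → ℕ) → Prop) (k : ℕ) :
    Finite {c : {c : ι → ℕ // p c} // ∑ i, c.1 i = k} :=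
  .of_injective (fun c => (⟨c.1.1, c.2⟩ : {c : ι → ℕ // ∑ i, c i = k}))
    fun c d h => Subtype.ext (Subtype.ext (by simpa using congrArg Subtype.val h))

theorem genFun_sum_fin_mul_one_sub_pow (μ : ℕ) :
    genFun R (fun c : Fin μ → ℕ => ∑ i, c i) * (1 - X) ^ μ = 1 := by
  induction μ with
  | zero =>
    ext k
    rw [pow_zero, mul_one, coeff_genFun, coeff_one]
    simp only [Finset.univ_eq_empty, Finset.sum_empty]
    split_ifs with hk
    · have : Unique {c : Fin 0 → ℕ // 0 = k} :=
        ⟨⟨⟨Fin.elim0, hk.symm⟩⟩, fun c => Subtype.ext (funext fun i => i.elim0)⟩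
      simp
    · have : IsEmpty {c : Fin 0 → ℕ // 0 = k} := ⟨fun c => hk c.2.symm⟩
      simp
  | succ μ ih =>
    have hid : genFun R (fun e : ℕ => e) = PowerSeries.mk 1 := by
      ext k
      rw [coeff_genFun, coeff_mk, Nat.card_unique]
      simp
    have hcons : genFun R (fun c : Fin (μ + 1) → ℕ => ∑ i, c i)
        = genFun R (fun e : ℕ => e) * genFun R (fun c : Fin μ → ℕ => ∑ i, c i) := by
      rw [← genFun_prod]
      exact (genFun_congr (Fin.consEquiv fun _ => ℕ) fun p => by simp [Fin.sum_univ_succ]).symm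
    rw [hcons, hid, pow_succ', mul_mul_mul_comm, mk_one_mul_one_sub_eq_one, ih,
      one_mul]

theorem genFun_sum_mul_one_sub_pow [Fintype ι] :
    genFun R (fun c : ι → ℕ => ∑ i, c i) * (1 - X) ^ Fintype.card ι = 1 := by
  rw [genFun_congr (Equiv.arrowCongr (Fintype.equivFin ι) (Equiv.refl ℕ))
    (w' := fun c => ∑ i, c i) fun c => Equiv.sum_comp (Fintype.equivFin ι).symm c]
  exact genFun_sum_fin_mul_one_sub_pow _

def positiveFunEquiv : {c : ι → ℕ // ¬∃ i, c i = 0} ≃ (ι → ℕ) where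
  toFun c i := c.1 i - 1
  invFun d := ⟨fun i => d i + 1, by simp⟩
  left_inv c := Subtype.ext (funext fun i => Nat.sub_add_cancel
    (Nat.one_le_iff_ne_zero.2 fun h => c.2 ⟨i, h⟩))
  right_inv d := by simp

theorem genFun_exists_eq_zero_mul_one_sub_pow [Fintype ι] :
    genFun R (fun c : {c : ι → ℕ // ∃ i, c i = 0} => ∑ i, c.1 i) * (1 - X) ^ Fintype.card ι
      = 1 - X ^ Fintype.card ι := by
  have hpos : genFun R (fun c : {c : ι → ℕ // ¬∃ i, c i = 0} => ∑ i, c.1 i)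
      = X ^ Fintype.card ι * genFun R (fun c : ι → ℕ => ∑ i, c i) := by
    rw [← genFun_add_const]
    refine genFun_congr positiveFunEquiv fun c => ?_
    rw [Fintype.card_eq_sum_ones, ← Finset.sum_add_distrib]
    exact Finset.sum_congr rfl fun i _ => Nat.sub_add_cancel
      (Nat.one_le_iff_ne_zero.2 fun h => c.2 ⟨i, h⟩)
  have hall := genFun_sum_mul_one_sub_pow (R := R) (ι := ι)
  have hsplit := hall
  rw [genFun_eq_add_compl (fun c : ι → ℕ => ∑ i, c i) fun c => ∃ i, c i = 0, hpos] at hsplit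
  linear_combination hsplit - X ^ Fintype.card ι * hall

def zeroOnBothEquiv (q : ι → Prop) [DecidablePred q] :
    {c : ι → ℕ // (∃ i, q i ∧ c i = 0) ∧ ∃ i, ¬q i ∧ c i = 0} ≃
      {c : {i // q i} → ℕ // ∃ i, c i = 0} × {c : {i // ¬q i} → ℕ // ∃ i, c i = 0} where
  toFun c := (⟨fun i => c.1 i, let ⟨i, hi, h⟩ := c.2.1; ⟨⟨i, hi⟩, h⟩⟩,
    ⟨fun i => c.1 i, let ⟨i, hi, h⟩ := c.2.2; ⟨⟨i, hi⟩, h⟩⟩)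
  invFun c := ⟨fun i => if h : q i then c.1.1 ⟨i, h⟩ else c.2.1 ⟨i, h⟩,
    let ⟨⟨i, hi⟩, h⟩ := c.1.2; ⟨i, hi, by simp [hi, h]⟩,
    let ⟨⟨i, hi⟩, h⟩ := c.2.2; ⟨i, hi, by simp [hi, h]⟩⟩
  left_inv c := Subtype.ext (funext fun i => by by_cases h : q i <;> simp [h])
  right_inv c := by ext i <;> simp [i.2]

theorem genFun_exists_eq_zero_both_mul_one_sub_pow [Fintype ι] (q : ι → Prop) [DecidablePred q] :
    genFun R (fun c : {c : ι → ℕ // (∃ i, q i ∧ c i = 0) ∧ ∃ i, ¬q i ∧ c i = 0} => ∑ i, c.1 i)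
        * (1 - X) ^ Fintype.card ι
      = (1 - X ^ Fintype.card {i // q i}) * (1 - X ^ Fintype.card {i // ¬q i}) := by
  rw [genFun_congr (zeroOnBothEquiv q) (w' := fun c => ∑ i, c.1.1 i + ∑ i, c.2.1 i)
      fun c => Fintype.sum_subtype_add_sum_subtype q c.1,
    genFun_prod (fun c : {c : {i // q i} → ℕ // ∃ i, c i = 0} => ∑ i, c.1 i)
      (fun c : {c : {i // ¬q i} → ℕ // ∃ i, c i = 0} => ∑ i, c.1 i),
    ← Fintype.card_congr (Equiv.sumCompl q), Fintype.card_sum, pow_add,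
    ← genFun_exists_eq_zero_mul_one_sub_pow, ← genFun_exists_eq_zero_mul_one_sub_pow]
  ring

end GenFun

section ConvexHull

variable {ι E : Type*} [Fintype ι] [AddCommGroup E] [Module ℝ E]

theorem convexHull_range_eq_image_stdSimplex (v : ι → E) :
    convexHull ℝ (Set.range v) = Fintype.linearCombination ℝ v '' stdSimplex ℝ ι := by
  classical
  rw [← convexHull_basis_eq_stdSimplex, LinearMap.image_convexHull, ← Set.range_comp]
  congr 2
  ext i
  simp [Fintype.linearCombination_apply, ite_smul]

theorem mem_smul_convexHull_range_iff [Nonempty ι] {v : ι → E} {k : ℝ} (hk : 0 ≤ k) {x : E} :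
    x ∈ k • convexHull ℝ (Set.range v) ↔
      ∃ w : ι → ℝ, 0 ≤ w ∧ ∑ i, w i = k ∧ ∑ i, w i • v i = x := by
  classical
  rw [convexHull_range_eq_image_stdSimplex]
  constructor
  · rintro ⟨_, ⟨w, ⟨hw0, hw1⟩, rfl⟩, rfl⟩
    refine ⟨k • w, fun i => mul_nonneg hk (hw0 i), ?_, ?_⟩
    · simp [← Finset.mul_sum, hw1]
    · simp [Fintype.linearCombination_apply, Finset.smul_sum, smul_smul]
  · rintro ⟨w, hw0, rfl, rfl⟩
    rcases hk.eq_or_lt with hk0 | hk0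
    · obtain rfl : w = 0 := funext fun i =>
        (Finset.sum_eq_zero_iff_of_nonneg fun j _ => hw0 j).1 hk0.symm i (Finset.mem_univ i)
      obtain ⟨i⟩ := ‹Nonempty ι›
      refine Set.mem_smul_set.2 ⟨_, ⟨_, single_mem_stdSimplex ℝ i, rfl⟩, ?_⟩
      simp
    · refine Set.mem_smul_set.2 ⟨_, ⟨(∑ i, w i)⁻¹ • w, ⟨fun i => ?_, ?_⟩, rfl⟩, ?_⟩
      · exact mul_nonneg (inv_nonneg.2 hk) (hw0 i)
      · simp [← Finset.mul_sum, hk0.ne']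
      · rw [← map_smul, smul_smul, mul_inv_cancel₀ hk0.ne', one_smul,
          Fintype.linearCombination_apply]

end ConvexHull

section DihedralPolytope

theorem mem_dihedral_iff {σ : Equiv.Perm (ZMod n)} :
    σ ∈ dihedral n ↔ ∃ c, σ = Equiv.addRight c ∨ σ = Equiv.subLeft c := by
  constructor
  · intro hσ
    induction hσ using Subgroup.closure_induction with
    | mem τ hτ =>
      rcases hτ with rfl | rfl
      · exact ⟨1, .inl rfl⟩
      · exact ⟨0, .inr (Equiv.ext fun x => (zero_sub x).symm)⟩
    | one => exact ⟨0, .inl Equiv.addRight_zero.symm⟩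
    | mul τ ρ _ _ hτ hρ =>
      obtain ⟨a, rfl | rfl⟩ := hτ <;> obtain ⟨b, rfl | rfl⟩ := hρ
      · exact ⟨b + a, .inl (Equiv.ext fun x => by simp [add_assoc])⟩
      · exact ⟨b + a, .inr (Equiv.ext fun x => by simp; abel)⟩
      · exact ⟨a - b, .inr (Equiv.ext fun x => by simp; abel)⟩
      · exact ⟨a - b, .inl (Equiv.ext fun x => by simp; abel)⟩
    | inv τ _ hτ =>
      obtain ⟨a, rfl | rfl⟩ := hτ
      · exact ⟨-a, .inl (Equiv.neg_addRight a)⟩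
      · exact ⟨a, .inr (inv_eq_of_mul_eq_one_right (Equiv.ext fun x => by simp))⟩
  · have hadd (c : ZMod n) : Equiv.addRight c ∈ dihedral n := by
      rw [← ZMod.natCast_zmod_val c, ← nsmul_one, ← Equiv.nsmul_addRight]
      exact pow_mem (Subgroup.subset_closure (Set.mem_insert _ _)) _
    rintro ⟨c, rfl | rfl⟩
    · exact hadd c
    · rw [show Equiv.subLeft c = Equiv.addRight c * rfl' n from
        Equiv.ext fun x => (neg_add_eq_sub x c).symm]
      exact mul_mem (hadd c) (Subgroup.subset_closure (Set.mem_insert_of_mem _ rfl))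

def dpVertex : ZMod n ⊕ ZMod n → Matrix (ZMod n) (ZMod n) ℝ :=
  Sum.elim (fun c => permMat n (Equiv.addRight c)) fun c => permMat n (Equiv.subLeft c)

def dpPoint (a b : ZMod n → ℝ) : Matrix (ZMod n) (ZMod n) ℝ :=
  of fun i j => a (i - j) + b (i + j)

theorem DP_eq_convexHull_range : DP n = convexHull ℝ (Set.range (dpVertex n)) := by
  refine congrArg (convexHull ℝ) (Set.ext fun M => ?_)
  simp only [mem_dihedral_iff, Set.mem_ofPred_eq, Set.mem_range, Sum.exists, dpVertex,
    Sum.elim_inl, Sum.elim_inr]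
  constructor
  · rintro ⟨σ, ⟨c, rfl | rfl⟩, rfl⟩
    exacts [.inl ⟨c, rfl⟩, .inr ⟨c, rfl⟩]
  · rintro (⟨c, rfl⟩ | ⟨c, rfl⟩)
    exacts [⟨_, ⟨c, .inl rfl⟩, rfl⟩, ⟨_, ⟨c, .inr rfl⟩, rfl⟩]

omit [NeZero n] in
theorem dpVertex_apply (q : ZMod n ⊕ ZMod n) (i j : ZMod n) :
    dpVertex n q i j =
      q.elim (fun c => if c = i - j then 1 else 0) fun c => if c = i + j then 1 else 0 := by
  rcases q with c | c
  · exact if_congr (by rw [Equiv.coe_addRight, eq_sub_iff_add_eq, eq_comm, add_comm]) rfl rfl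
  · exact if_congr (by rw [Equiv.subLeft_apply, eq_sub_iff_add_eq, eq_comm, eq_comm (a := c)])
      rfl rfl

theorem sum_smul_dpVertex (w : ZMod n ⊕ ZMod n → ℝ) :
    ∑ q, w q • dpVertex n q = dpPoint n (w ∘ Sum.inl) (w ∘ Sum.inr) := by
  ext i j
  simp [Matrix.sum_apply, dpVertex_apply, Fintype.sum_sum_type, dpPoint]

theorem mem_smul_DP_iff {k : ℝ} (hk : 0 ≤ k) {x : Matrix (ZMod n) (ZMod n) ℝ} :
    x ∈ k • DP n ↔
      ∃ a b : ZMod n → ℝ, 0 ≤ a ∧ 0 ≤ b ∧ ∑ c, a c + ∑ c, b c = k ∧ dpPoint n a b = x := by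
  rw [DP_eq_convexHull_range, mem_smul_convexHull_range_iff hk]
  constructor
  · rintro ⟨w, hw0, rfl, rfl⟩
    exact ⟨w ∘ Sum.inl, w ∘ Sum.inr, fun c => hw0 _, fun c => hw0 _,
      (Fintype.sum_sum_type w).symm, (sum_smul_dpVertex n w).symm⟩
  · rintro ⟨a, b, ha, hb, rfl, rfl⟩
    exact ⟨Sum.elim a b, fun q => q.rec ha hb, Fintype.sum_sum_type _, sum_smul_dpVertex n _⟩

end DihedralPolytope

section Even

variable (m : ℕ)

def parity : ZMod (2 * m) →+* ZMod 2 := ZMod.castHom (dvd_mul_right 2 m) (ZMod 2)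

theorem parity_sub_eq_parity_add (i j : ZMod (2 * m)) :
    parity m (i - j) = parity m (i + j) := by
  rw [map_sub, map_add, CharTwo.sub_eq_add]

variable [NeZero (2 * m)]

theorem exists_sub_eq_add_eq {d s : ZMod (2 * m)} (h : parity m d = parity m s) :
    ∃ i j, i - j = d ∧ i + j = s := by
  have hker : parity m (s - d) = 0 := by rw [map_sub, h, sub_self]
  rw [parity, ZMod.castHom_apply, ZMod.cast_eq_val, ZMod.natCast_eq_zero_iff] at hker
  obtain ⟨r, hr⟩ := hker
  refine ⟨d + r, r, add_sub_cancel_right d r, ?_⟩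
  have : s - d = 2 * r := by rw [← ZMod.natCast_zmod_val (s - d), hr]; push_cast; rfl
  linear_combination -this

theorem card_parity_fiber (p : ZMod 2) : Fintype.card {d // parity m d = p} = m := by
  have hsurj : Function.Surjective (parity m) := ZMod.ringHom_surjective _
  have hfib (p : ZMod 2) :
      Fintype.card {d // parity m d = p} = Fintype.card {d // parity m d = 0} := by
    rw [Fintype.card_subtype, Fintype.card_subtype]
    exact AddMonoidHom.card_fiber_eq_of_mem_range (parity m).toAddMonoidHom (hsurj p) (hsurj 0)
  have htotal := Finset.card_eq_sum_card_fiberwise (s := Finset.univ) (t := Finset.univ)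
    fun d _ => Finset.mem_univ (parity m d)
  simp only [Finset.card_univ, ZMod.card, ← Fintype.card_subtype, hfib, Finset.sum_const,
    smul_eq_mul] at htotal
  rw [hfib p]
  omega

abbrev ReducedCoeffs : Type := {A : ZMod (2 * m) → ℕ // ∀ p, ∃ d, parity m d = p ∧ A d = 0}

def latticeWeight (t : ReducedCoeffs m × (ZMod (2 * m) → ℕ)) : ℕ := ∑ d, t.1.1 d + ∑ s, t.2 s

def latticePoint (t : ReducedCoeffs m × (ZMod (2 * m) → ℕ)) :
    Matrix (ZMod (2 * m)) (ZMod (2 * m)) ℝ :=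
  dpPoint (2 * m) (fun d => t.1.1 d) fun s => t.2 s

theorem latticePoint_injective : Function.Injective (latticePoint m) := by
  rintro ⟨⟨A, hA⟩, B⟩ ⟨⟨A', hA'⟩, B'⟩ h
  have hsum (d s : ZMod (2 * m)) (hds : parity m d = parity m s) : A d + B s = A' d + B' s := by
    obtain ⟨i, j, rfl, rfl⟩ := exists_sub_eq_add_eq m hds
    have := congrFun (congrFun h i) j
    simp only [latticePoint, dpPoint, of_apply] at this
    exact_mod_cast this
  obtain rfl : B = B' := funext fun s => by
    obtain ⟨d, hd, hAd⟩ := hA (parity m s)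
    obtain ⟨d', hd', hAd'⟩ := hA' (parity m s)
    have := hsum d s hd
    have := hsum d' s hd'
    omega
  obtain rfl : A = A' := funext fun d => by have := hsum d d rfl; omega
  rfl

theorem exists_reduced_dpPoint_eq {a b : ZMod (2 * m) → ℝ} (ha : 0 ≤ a) (hb : 0 ≤ b) :
    ∃ a' b' : ZMod (2 * m) → ℝ, 0 ≤ a' ∧ 0 ≤ b' ∧ (∀ p, ∃ d, parity m d = p ∧ a' d = 0) ∧
      ∑ d, a' d + ∑ s, b' s = ∑ d, a d + ∑ s, b s ∧
      dpPoint (2 * m) a' b' = dpPoint (2 * m) a b := by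
  have hmin (p : ZMod 2) : ∃ d₀, parity m d₀ = p ∧ ∀ d, parity m d = p → a d₀ ≤ a d := by
    obtain ⟨d, hd⟩ := ZMod.ringHom_surjective (parity m) p
    obtain ⟨d₀, hd₀, hmin⟩ :=
      Finset.exists_min_image {d | parity m d = p} a ⟨d, by simpa using hd⟩
    exact ⟨d₀, by simpa using hd₀, fun d hd => hmin d (by simpa using hd)⟩
  choose d₀ hd₀ hmin using hmin
  -- move the minimum of `a` on each parity class over to `b`
  set μ : ZMod (2 * m) → ℝ := fun d => a (d₀ (parity m d))
  refine ⟨a - μ, b + μ, fun d => sub_nonneg.2 (hmin _ d rfl), fun s => add_nonneg (hb s) (ha _),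
    fun p => ⟨d₀ p, hd₀ p, by simp [μ, hd₀]⟩, ?_, ?_⟩
  · simp only [Pi.sub_apply, Pi.add_apply, Finset.sum_sub_distrib, Finset.sum_add_distrib]
    ring
  · ext i j
    simp only [dpPoint, of_apply, Pi.sub_apply, Pi.add_apply, μ, parity_sub_eq_parity_add]
    ring

theorem exists_natCast_of_isInt {a b : ZMod (2 * m) → ℝ} (ha : 0 ≤ a) (hb : 0 ≤ b)
    (hred : ∀ p, ∃ d, parity m d = p ∧ a d = 0) (hint : IsInt (2 * m) (dpPoint (2 * m) a b)) :
    (∀ d, ∃ k : ℕ, a d = k) ∧ ∀ s, ∃ k : ℕ, b s = k := by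
  have hnat (r : ℝ) (hr : 0 ≤ r) : (∃ z : ℤ, r = z) → ∃ k : ℕ, r = k := by
    rintro ⟨z, rfl⟩
    lift z to ℕ using (by exact_mod_cast hr)
    exact ⟨z, by simp⟩
  have hb_int (s : ZMod (2 * m)) : ∃ z : ℤ, b s = z := by
    obtain ⟨d, hd, had⟩ := hred (parity m s)
    obtain ⟨i, j, hij, hij'⟩ := exists_sub_eq_add_eq m hd
    obtain ⟨z, hz⟩ := hint i j
    exact ⟨z, by simpa [dpPoint, hij, hij', had] using hz⟩
  have ha_int (d : ZMod (2 * m)) : ∃ z : ℤ, a d = z := by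
    obtain ⟨z, hz⟩ := hint d 0
    obtain ⟨z', hz'⟩ := hb_int d
    refine ⟨z - z', ?_⟩
    simp only [dpPoint, of_apply, sub_zero, add_zero] at hz
    push_cast
    linarith
  exact ⟨fun d => hnat _ (ha d) (ha_int d), fun s => hnat _ (hb s) (hb_int s)⟩

theorem latticePoints_smul_DP (k : ℕ) :
    {x | x ∈ (k : ℝ) • DP (2 * m) ∧ IsInt (2 * m) x}
      = latticePoint m '' {t | latticeWeight m t = k} := by
  ext x
  simp only [Set.mem_ofPred_eq, Set.mem_image, mem_smul_DP_iff (2 * m) (Nat.cast_nonneg k)]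
  constructor
  · rintro ⟨⟨a, b, ha, hb, hab, rfl⟩, hint⟩
    obtain ⟨a', b', ha', hb', hred, hsum, heq⟩ := exists_reduced_dpPoint_eq m ha hb
    rw [← heq] at hint ⊢
    obtain ⟨hA, hB⟩ := exists_natCast_of_isInt m ha' hb' hred hint
    choose A hA using hA
    choose B hB using hB
    obtain rfl : a' = fun d => (A d : ℝ) := funext hA
    obtain rfl : b' = fun s => (B s : ℝ) := funext hB
    refine ⟨(⟨A, fun p => ?_⟩, B), ?_, rfl⟩
    · obtain ⟨d, hd, hAd⟩ := hred p
      exact ⟨d, hd, by simpa using hAd⟩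
    · rw [hab] at hsum
      beta_reduce at hsum
      exact_mod_cast hsum
  · rintro ⟨t, ht, rfl⟩
    refine ⟨⟨_, _, fun d => Nat.cast_nonneg _, fun s => Nat.cast_nonneg _, ?_, rfl⟩,
      fun i j => ⟨t.1.1 (i - j) + t.2 (i + j), by simp [latticePoint, dpPoint]⟩⟩
    rw [← ht, latticeWeight]
    push_cast
    rfl

theorem genFun_reducedCoeffs_mul_one_sub_pow {R : Type*} [CommRing R] :
    genFun R (fun A : ReducedCoeffs m => ∑ d, A.1 d) * (1 - X) ^ (2 * m) = (1 - X ^ m) ^ 2 := by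
  have h01 : ∀ p : ZMod 2, ¬p = 0 ↔ p = 1 := by decide
  have hiff (A : ZMod (2 * m) → ℕ) : (∀ p, ∃ d, parity m d = p ∧ A d = 0) ↔
      (∃ d, parity m d = 0 ∧ A d = 0) ∧ ∃ d, ¬parity m d = 0 ∧ A d = 0 := by
    simp only [h01]
    exact ⟨fun h => ⟨h 0, h 1⟩, fun h p => by fin_cases p; exacts [h.1, h.2]⟩
  have hcompl : Fintype.card {d // ¬parity m d = 0} = m := by
    rw [Fintype.card_congr (Equiv.subtypeEquivRight fun d => h01 (parity m d)),
      card_parity_fiber]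
  have := genFun_exists_eq_zero_both_mul_one_sub_pow (R := R) fun d => parity m d = 0
  rw [ZMod.card, card_parity_fiber, hcompl, ← sq] at this
  rw [genFun_congr (Equiv.subtypeEquivRight hiff) (w := fun A => ∑ d, A.1 d)
    (w' := fun A => ∑ d, A.1 d) fun _ => rfl, this]

theorem genFun_latticeWeight_mul_one_sub_pow {R : Type*} [CommRing R] :
    genFun R (latticeWeight m) * (1 - X) ^ (4 * m) = (1 - X ^ m) ^ 2 := by
  unfold latticeWeight
  rw [genFun_prod (fun A : ReducedCoeffs m => ∑ d, A.1 d) fun B : ZMod (2 * m) → ℕ => ∑ s, B s,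
    show 4 * m = 2 * m + Fintype.card (ZMod (2 * m)) by rw [ZMod.card]; ring, pow_add,
    mul_mul_mul_comm, genFun_reducedCoeffs_mul_one_sub_pow, genFun_sum_mul_one_sub_pow, mul_one]

end Even

theorem card_filter_add_eq (m k : ℕ) :
    #{p ∈ range m ×ˢ range m | p.1 + p.2 = k} = min (k + 1) (2 * m - 1 - k) := by
  have : #{p ∈ range m ×ˢ range m | p.1 + p.2 = k} = #(Ico (k + 1 - m) (min (k + 1) m)) := by
    refine card_nbij' Prod.fst (fun a => (a, k - a)) ?_ ?_ ?_ ?_ <;> intro p hp <;>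
      simp only [coe_filter, mem_product, mem_range, Set.mem_ofPred_eq, coe_Ico,
        Set.mem_Ico] at hp ⊢
    · omega
    · omega
    · exact Prod.ext rfl (by dsimp only; omega)
  rw [this, Nat.card_Ico]
  omega

theorem sq_geom_sum_X {R : Type*} [CommRing R] (m : ℕ) :
    (∑ i ∈ range m, (X : PowerSeries R) ^ i) ^ 2
      = ∑ i ∈ range (2 * m - 1), C ((min (i + 1) (2 * m - 1 - i) : ℕ) : R) * X ^ i := by
  ext k
  rw [sq, sum_mul_sum, ← sum_product', map_sum, map_sum]
  simp_rw [← pow_add, coeff_X_pow, coeff_C_mul_X_pow]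
  rw [sum_boole, sum_ite_eq, filter_congr fun p _ => eq_comm, card_filter_add_eq]
  split_ifs with hk
  · rfl
  · simp only [mem_range] at hk
    simp [show 2 * m - 1 - k = 0 by omega]

theorem DP_even_hstar_general (m : ℕ) [NeZero (2 * m)] :
    (PowerSeries.mk fun k : ℕ =>
        (({x | x ∈ (k : ℝ) • DP (2 * m) ∧ IsInt (2 * m) x}.ncard : ℝ)))
      * (1 - PowerSeries.X) ^ (2 * (2 * m) - 2)
    = (∑ i ∈ Finset.range m, PowerSeries.X ^ i) ^ 2 ∧
    (∑ i ∈ Finset.range m, (PowerSeries.X : PowerSeries ℝ) ^ i) ^ 2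
    = ∑ i ∈ Finset.range (2 * m - 1),
        PowerSeries.C ((min (i + 1) (2 * m - 1 - i) : ℕ) : ℝ) * PowerSeries.X ^ i := by
  have hm : 0 < m := by have := NeZero.ne (2 * m); omega
  have hunit : IsUnit ((1 - X : PowerSeries ℝ) ^ 2) :=
    (IsUnit.of_mul_eq_one_right _ (mk_one_mul_one_sub_eq_one ℝ)).pow 2
  refine ⟨?_, sq_geom_sum_X m⟩
  rw [← hunit.mul_left_inj, mul_assoc, ← pow_add, show 2 * (2 * m) - 2 + 2 = 4 * m by omega,
    ← mul_pow, geom_sum_mul_neg, ← genFun_latticeWeight_mul_one_sub_pow m]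
  congr 1
  ext k
  rw [coeff_mk, coeff_genFun, latticePoints_smul_DP,
    Set.ncard_image_of_injective _ (latticePoint_injective m)]
  rfl

/-- for even `n = 2m`, the `h*`-polynomial of `DP_n` equals
`(1 + t + ⋯ + t^{m-1})²`, whose coefficient vector is `(1,2,…,m-1,m,m-1,…,2,1)`. -/
theorem DP_even_hstar (m : ℕ) [NeZero (2 * m)] (hm : 2 ≤ m) :
    (PowerSeries.mk fun k : ℕ =>
        (({x | x ∈ (k : ℝ) • DP (2 * m) ∧ IsInt (2 * m) x}.ncard : ℝ)))
      * (1 - PowerSeries.X) ^ (2 * (2 * m) - 2)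
    = (∑ i ∈ Finset.range m, PowerSeries.X ^ i) ^ 2 ∧
    (∑ i ∈ Finset.range m, (PowerSeries.X : PowerSeries ℝ) ^ i) ^ 2
    = ∑ i ∈ Finset.range (2 * m - 1),
        PowerSeries.C ((min (i + 1) (2 * m - 1 - i) : ℕ) : ℝ) * PowerSeries.X ^ i :=
  DP_even_hstar_general m
end
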